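/- For every n > 0 and every m < n, the target s_n is unreachable in the filter protocol F_n with m processes: every configuration γ reachable from ⟨s_0^m, 0⟩ satisfies st(γ)(s_n) = 0. -/

import Mathlib

/-- Operation type of a register protocol: read or write. -/
inductive Op : Type
  | R : Op
  | W : Op
deriving DecidableEq

instance instFintypeOp : Fintype Op :=
  ⟨{Op.R, Op.W}, fun x => by cases x <;> simp⟩

/-- A location has at least one outgoing transition. -/
def Nonblock {Q D : Type*} (T : Set (Q × Op × D × Q)) : Prop :=
  ∀ q : Q, ∃ op d q', (q, op, d, q') ∈ T

/-- Whenever a read transition exists from `q`, reads of every datum are enabled in `q`. -/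
def ReadTotal {Q D : Type*} (T : Set (Q × Op × D × Q)) : Prop :=
  ∀ q d' q', (q, Op.R, d', q') ∈ T → ∀ d : D, ∃ qd, (q, Op.R, d, qd) ∈ T

/-- One step of the distributed system associated with transition set `T`:
a configuration is a pair of a finite multiset of locations and a register datum. -/
def IsStep {Q D : Type*} [DecidableEq Q] (T : Set (Q × Op × D × Q)) :
    Multiset Q × D → Multiset Q × D → Prop := fun γ γ' =>
  ∃ q op d'' q', (q, op, d'', q') ∈ T ∧ q ∈ γ.1 ∧
    γ'.1 = γ.1 - {q} + {q'} ∧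
    ((op = Op.R ∧ γ.2 = d'' ∧ γ'.2 = d'') ∨ (op = Op.W ∧ γ'.2 = d''))

/-- Reachability: reflexive-transitive closure of the step relation. -/
def Reach {Q D : Type*} [DecidableEq Q] (T : Set (Q × Op × D × Q)) :
    Multiset Q × D → Multiset Q × D → Prop :=
  Relation.ReflTransGen (IsStep T)

/-- `PostStar T S` is the set of configurations reachable from some configuration of `S`. -/
def PostStar {Q D : Type*} [DecidableEq Q] (T : Set (Q × Op × D × Q))
    (S : Set (Multiset Q × D)) : Set (Multiset Q × D) :=
  {γ' | ∃ γ ∈ S, Reach T γ γ'}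

/-- `PreStar T S` is the set of configurations from which some configuration of `S`
is reachable. -/
def PreStar {Q D : Type*} [DecidableEq Q] (T : Set (Q × Op × D × Q))
    (S : Set (Multiset Q × D)) : Set (Multiset Q × D) :=
  {γ | ∃ γ' ∈ S, Reach T γ γ'}

/-- `[qf]`: configurations containing at least one process in location `qf`. -/
def TargetSet {Q D : Type*} [DecidableEq Q] (qf : Q) : Set (Multiset Q × D) :=
  {γ | 0 < γ.1.count qf}

/-- The order `⪯` on configurations: same register content, same support,
and componentwise smaller multiset. -/
def ConfLE {Q D : Type*} [DecidableEq Q] (γ γ' : Multiset Q × D) : Prop :=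
  γ.2 = γ'.2 ∧ γ.1.toFinset = γ'.1.toFinset ∧ γ.1 ≤ γ'.1

/-- Upward closure of a set of configurations with respect to `⪯`. -/
def UpSet {Q D : Type*} [DecidableEq Q] (B : Set (Multiset Q × D)) :
    Set (Multiset Q × D) :=
  {γ' | ∃ γ ∈ B, ConfLE γ γ'}

/-- Transitions of the filter protocol `F_n` (for `n > 0`): locations
`s_0, …, s_n` are `Fin (n+1)`, data `0, …, n−1` are `Fin n`. Transitions:
`(s_0, W, 0, s_0)`; `(s_i, R, i, s_{i+1})` for `0 ≤ i ≤ n−1`;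
`(s_i, W, i, s_0)` for `1 ≤ i ≤ n−1`; and read self-loops `(s, R, d, s)` for
every pair `(s, d)` for which no other read transition is specified. -/
def FilterT (n : ℕ) : Set (Fin (n + 1) × Op × Fin n × Fin (n + 1)) := fun t =>
  match t with
  | (s, Op.W, d, s') =>
      ((s : ℕ) = 0 ∧ (d : ℕ) = 0 ∧ (s' : ℕ) = 0) ∨
      (1 ≤ (s : ℕ) ∧ (s : ℕ) ≤ n - 1 ∧ (d : ℕ) = (s : ℕ) ∧ (s' : ℕ) = 0)
  | (s, Op.R, d, s') =>
      ((s : ℕ) ≤ n - 1 ∧ (d : ℕ) = (s : ℕ) ∧ (s' : ℕ) = (s : ℕ) + 1) ∨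
      (¬ ((s : ℕ) ≤ n - 1 ∧ (d : ℕ) = (s : ℕ)) ∧ s' = s)

/-!
Let `mass k γ` be the number of processes in `s_k, s_{k+1}, …`, plus one if the register holds a
datum `≥ k` (such a datum was written by a process that had reached `s_k`). Then
`mass k γ ≠ 0 → mass k γ + k ≤ m + 1` is invariant: `mass 0` is constant, and `mass (k + 1)` only
grows when a process at `s_k` reads `k`, which it can only do while it and the register both count
in `mass k`, so the new `mass (k + 1)` is still below the old `mass k`. The register never holds
`n`, so `mass n` counts just the processes in `s_n`, and one of them would force `n ≤ m`.
-/

theorem Multiset.countP_mono_left {α : Type*} {p q : α → Prop} [DecidablePred p]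
    [DecidablePred q] (h : ∀ a, p a → q a) (s : Multiset α) : s.countP p ≤ s.countP q := by
  simpa only [Multiset.countP_eq_card_filter] using
    Multiset.card_le_card (Multiset.monotone_filter_right s h)

theorem IsStep.exists_cons_erase {Q D : Type*} [DecidableEq Q] {T : Set (Q × Op × D × Q)}
    {γ γ' : Multiset Q × D} (h : IsStep T γ γ') :
    ∃ q op d q', (q, op, d, q') ∈ T ∧ γ.1 = q ::ₘ γ.1.erase q ∧ γ'.1 = q' ::ₘ γ.1.erase q ∧
      ((op = Op.R ∧ γ.2 = d ∧ γ'.2 = d) ∨ (op = Op.W ∧ γ'.2 = d)) := by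
  obtain ⟨q, op, d, q', ht, hq, hγ', hreg⟩ := h
  refine ⟨q, op, d, q', ht, (Multiset.cons_erase hq).symm, ?_, hreg⟩
  rw [hγ', Multiset.sub_singleton, Multiset.add_comm, Multiset.singleton_add]

namespace FilterT

variable {n : ℕ}

theorem mem_cases {q q' : Fin (n + 1)} {op : Op} {d : Fin n} (h : (q, op, d, q') ∈ FilterT n) :
    (op = Op.W ∧ q'.val = 0 ∧ d.val ≤ q.val) ∨
      (op = Op.R ∧ d.val = q.val ∧ q'.val = q.val + 1) ∨ (op = Op.R ∧ q' = q) := by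
  simp only [FilterT, Membership.mem, Set.Mem] at h
  cases op
  · rcases h with ⟨-, hd, hq'⟩ | ⟨-, rfl⟩
    · exact Or.inr (Or.inl ⟨rfl, hd, hq'⟩)
    · exact Or.inr (Or.inr ⟨rfl, rfl⟩)
  · rcases h with ⟨-, hd, hq'⟩ | ⟨-, -, hd, hq'⟩ <;> exact Or.inl ⟨rfl, hq', by omega⟩

theorem isStep_cases {γ γ' : Multiset (Fin (n + 1)) × Fin n} (h : IsStep (FilterT n) γ γ') :
    ∃ q q' ρ, γ.1 = q ::ₘ ρ ∧ γ'.1 = q' ::ₘ ρ ∧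
      ((q'.val = 0 ∧ γ'.2.val ≤ q.val) ∨
        (γ'.2 = γ.2 ∧ γ.2.val = q.val ∧ q'.val = q.val + 1) ∨ (γ'.2 = γ.2 ∧ q' = q)) := by
  obtain ⟨q, op, d, q', ht, hγ, hγ', hreg⟩ := h.exists_cons_erase
  refine ⟨q, q', _, hγ, hγ', ?_⟩
  rcases mem_cases ht with ⟨rfl, hq', hd⟩ | ⟨rfl, hd, hq'⟩ | ⟨rfl, rfl⟩
  · obtain ⟨⟨⟩, -⟩ | ⟨-, rfl⟩ := hreg
    exact Or.inl ⟨hq', hd⟩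
  · obtain ⟨-, hd₁, hd₂⟩ | ⟨⟨⟩, -⟩ := hreg
    exact Or.inr (Or.inl ⟨hd₂.trans hd₁.symm, hd₁ ▸ hd, hq'⟩)
  · obtain ⟨-, hd₁, hd₂⟩ | ⟨⟨⟩, -⟩ := hreg
    exact Or.inr (Or.inr ⟨hd₂.trans hd₁.symm, rfl⟩)

def mass (k : ℕ) (γ : Multiset (Fin (n + 1)) × Fin n) : ℕ :=
  γ.1.countP (k ≤ ·.val) + if k ≤ γ.2.val then 1 else 0

theorem mass_zero (γ : Multiset (Fin (n + 1)) × Fin n) : mass 0 γ = Multiset.card γ.1 + 1 := by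
  simp [mass]

theorem mass_zero_step {γ γ' : Multiset (Fin (n + 1)) × Fin n} (h : IsStep (FilterT n) γ γ') :
    mass 0 γ' = mass 0 γ := by
  obtain ⟨q, q', ρ, hγ, hγ', -⟩ := isStep_cases h
  simp only [mass_zero, hγ, hγ', Multiset.card_cons]

theorem mass_succ_step {γ γ' : Multiset (Fin (n + 1)) × Fin n} (h : IsStep (FilterT n) γ γ')
    (k : ℕ) : mass (k + 1) γ' ≤ mass (k + 1) γ ∨ mass (k + 1) γ' < mass k γ := by
  obtain ⟨μ, r⟩ := γ
  obtain ⟨μ', r'⟩ := γ'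
  obtain ⟨q, q', ρ, rfl, rfl, hcase⟩ := isStep_cases h
  have hmono : ρ.countP (k + 1 ≤ ·.val) ≤ ρ.countP (k ≤ ·.val) :=
    Multiset.countP_mono_left (fun _ ↦ Nat.le_of_succ_le) ρ
  dsimp only at hcase
  simp only [mass, Multiset.countP_cons]
  rcases hcase with ⟨hq', hr⟩ | ⟨rfl, hr, hq'⟩ | ⟨rfl, rfl⟩ <;> split_ifs <;> omega

def Invariant (m : ℕ) (γ : Multiset (Fin (n + 1)) × Fin n) : Prop :=
  ∀ k, mass k γ ≠ 0 → mass k γ + k ≤ m + 1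

theorem invariant_init (hn : 0 < n) (m : ℕ) :
    Invariant m (Multiset.replicate m (⟨0, by omega⟩ : Fin (n + 1)), (⟨0, hn⟩ : Fin n)) := by
  rintro (_ | k) hk
  · simp [mass_zero]
  · simp [mass, Multiset.countP_eq_zero, Multiset.mem_replicate] at hk

theorem Invariant.step {m : ℕ} {γ γ' : Multiset (Fin (n + 1)) × Fin n} (hinv : Invariant m γ)
    (h : IsStep (FilterT n) γ γ') : Invariant m γ' := by
  rintro (_ | k) hk
  · rw [mass_zero_step h] at hk ⊢
    exact hinv 0 hk
  · rcases mass_succ_step h k with hle | hlt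
    · have := hinv (k + 1) (by omega)
      omega
    · have := hinv k (by omega)
      omega

theorem Invariant.reach {m : ℕ} {γ γ' : Multiset (Fin (n + 1)) × Fin n} (hinv : Invariant m γ)
    (h : Reach (FilterT n) γ γ') : Invariant m γ' := by
  induction h with
  | refl => exact hinv
  | tail _ hstep ih => exact ih.step hstep

theorem mass_eq_count_last (γ : Multiset (Fin (n + 1)) × Fin n) : mass n γ = γ.1.count (Fin.last n) := by
  have hreg : ¬ n ≤ γ.2.val := not_le.mpr γ.2.isLt
  have hlast : ∀ s : Fin (n + 1), n ≤ s.val ↔ Fin.last n = s := fun s ↦ by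
    rw [Fin.ext_iff, Fin.val_last]
    omega
  simp only [mass, hreg, if_false, add_zero, hlast, Multiset.count_eq_card_filter_eq,
    Multiset.countP_eq_card_filter]

end FilterT

/-- with fewer than `n` processes, the target `s_n` of the filter
protocol `F_n` is unreachable: every reachable configuration contains no process
in `s_n`. -/
theorem stmt_13 (n : ℕ) (hn : 0 < n) (m : ℕ) (hm : m < n)
    (γ : Multiset (Fin (n + 1)) × Fin n)
    (hreach : Reach (FilterT n)
      (Multiset.replicate m (⟨0, by omega⟩ : Fin (n + 1)), (⟨0, hn⟩ : Fin n)) γ) :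
    γ.1.count (Fin.last n) = 0 := by
  have hinv := (FilterT.invariant_init hn m).reach hreach n
  rw [FilterT.mass_eq_count_last] at hinv
  by_contra hne
  have := hinv hne
  omega
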